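/- The point (x₁,y₁) = (√(Φ/(4Ω₀+Φ)), 0), (x₂,y₂) = (-√(Φ/(4Ω₀+Φ)), 0) is an equilibrium of the vortex dipole system, i.e., the right-hand sides of the equations of motion vanish at this configuration. -/

import Mathlib

/-! For a symmetric pair `z₁ = s`, `z₂ = -s` on the real axis both equations reduce to the single
balance `Ω₀ / (1 - s²) · s = Φ / (2 (2s)²) · 2s` between rotation and interaction, which after
clearing denominators is `4 Ω₀ s² = Φ (1 - s²)`, i.e. `s² (4 Ω₀ + Φ) = Φ`: exactly what
`s = √(Φ / (4 Ω₀ + Φ))` satisfies. -/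

namespace VortexDipole

lemma rotation_eq_interaction {Ω₀ Φ s : ℝ} (hΩ₀ : Ω₀ ≠ 0) (hs : s ^ 2 * (4 * Ω₀ + Φ) = Φ) :
    Ω₀ / (1 - s ^ 2) * s = Φ / (2 * (2 * s) ^ 2) * (2 * s) := by
  rcases eq_or_ne s 0 with rfl | hs₀
  · simp
  have h_one_sub : 1 - s ^ 2 ≠ 0 := by
    intro h
    apply hΩ₀
    have : 4 * Ω₀ * s ^ 2 = 0 := by linear_combination hs + Φ * h
    simpa [hs₀] using this
  field_simp
  linear_combination hs

lemma symmetric_pair_equilibrium {Ω₀ Φ s : ℝ} (hΩ₀ : Ω₀ ≠ 0) (hs₀ : 0 ≤ s)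
    (hs : s ^ 2 * (4 * Ω₀ + Φ) = Φ) :
    -((Ω₀ / (1 - ‖(s : ℂ)‖ ^ 2) : ℝ) : ℂ) * s
        + ((Φ / (2 * ‖(s : ℂ) - -s‖ ^ 2) : ℝ) : ℂ) * (s - -s) = 0 ∧
      ((Ω₀ / (1 - ‖-(s : ℂ)‖ ^ 2) : ℝ) : ℂ) * -s
        - ((Φ / (2 * ‖(s : ℂ) - -s‖ ^ 2) : ℝ) : ℂ) * (-s - s) = 0 := by
  have h_diff : (s : ℂ) - -s = ((2 * s : ℝ) : ℂ) := by push_cast; ring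
  have h_balance := congrArg (fun x : ℝ ↦ (x : ℂ)) (rotation_eq_interaction hΩ₀ hs)
  simp only [norm_neg, h_diff, Complex.norm_real, Real.norm_of_nonneg hs₀,
    Real.norm_of_nonneg (by positivity : 0 ≤ 2 * s)] at h_balance ⊢
  push_cast at h_balance ⊢
  constructor <;> linear_combination (-1 : ℂ) * h_balance

end VortexDipole

open VortexDipole in
theorem stationary_equilibrium_exists
    (Ω₀ Φ : ℝ) (hΩ₀ : 0 < Ω₀) (hΦ : 0 < Φ)
    (z₁ z₂ : ℂ)
    (hz₁ : z₁ = ((Real.sqrt (Φ / (4 * Ω₀ + Φ)) : ℝ) : ℂ))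
    (hz₂ : z₂ = -((Real.sqrt (Φ / (4 * Ω₀ + Φ)) : ℝ) : ℂ)) :
    -((Ω₀ / (1 - ‖z₁‖ ^ 2) : ℝ) : ℂ) * z₁
        + ((Φ / (2 * ‖z₁ - z₂‖ ^ 2) : ℝ) : ℂ) * (z₁ - z₂) = 0 ∧
      ((Ω₀ / (1 - ‖z₂‖ ^ 2) : ℝ) : ℂ) * z₂
        - ((Φ / (2 * ‖z₁ - z₂‖ ^ 2) : ℝ) : ℂ) * (z₂ - z₁) = 0 := by
  subst hz₁ hz₂
  have h_denom : 0 < 4 * Ω₀ + Φ := by positivity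
  refine symmetric_pair_equilibrium hΩ₀.ne' (Real.sqrt_nonneg _) ?_
  rw [Real.sq_sqrt (by positivity), div_mul_cancel₀ _ h_denom.ne']
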